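/- arXiv:2501.07306 — 7 statements merged into one kernel-verified Lean document; each statement's English description precedes it below -/
import Mathlib

section
/- Let f, h : ℝ^d → ℝ be differentiable on an open convex set D and let L > 0. Then Lh - f is convex on D if and only if for all x, y ∈ D, f(x) ≤ f(y) + ⟨∇f(y), x - y⟩ + L·D_h(x,y). -/
/-!
A differentiable function is convex on a convex set iff it lies above its tangent planes there:
restricted to a segment this is the one-variable slope inequality, and conversely averaging the
tangent planes at a convex combination `z` yields Jensen's inequality at `z`. Since the derivative
of `L h - f` is `L Dh - Df`, the tangent-plane inequality for `L h - f` is the relative smoothness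
inequality.
-/

open scoped RealInnerProductSpace

section

variable {E : Type*} [NormedAddCommGroup E] [NormedSpace ℝ E] {D : Set E} {g : E → ℝ}

theorem ConvexOn.add_fderiv_sub_le (hg : ConvexOn ℝ D g) {x y : E} (hx : x ∈ D) (hy : y ∈ D)
    (hdiff : DifferentiableAt ℝ g y) : g y + fderiv ℝ g y (x - y) ≤ g x := by
  have hseg : Set.Icc (0 : ℝ) 1 ⊆ AffineMap.lineMap y x ⁻¹' D := fun t ht =>
    hg.1.lineMap_mem hy hx ht
  have hconv : ConvexOn ℝ (Set.Icc 0 1) (g ∘ AffineMap.lineMap (k := ℝ) y x) :=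
    (hg.comp_affineMap _).subset hseg (convex_Icc 0 1)
  have hderiv : HasDerivAt (g ∘ AffineMap.lineMap (k := ℝ) y x) (fderiv ℝ g y (x - y)) 0 := by
    have hgy : HasFDerivAt g (fderiv ℝ g y) (AffineMap.lineMap (k := ℝ) y x 0) := by
      simpa using hdiff.hasFDerivAt
    exact hgy.comp_hasDerivAt 0 AffineMap.hasDerivAt_lineMap
  have hslope := hconv.le_slope_of_hasDerivAt (by simp) (by simp) zero_lt_one hderiv
  simp only [slope_def_field, Function.comp_apply, AffineMap.lineMap_apply_zero,
    AffineMap.lineMap_apply_one, sub_zero, div_one] at hslope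
  linarith

theorem ConvexOn.of_forall_add_le (hD : Convex ℝ D) (ℓ : E → E →L[ℝ] ℝ)
    (hℓ : ∀ x ∈ D, ∀ y ∈ D, g y + ℓ y (x - y) ≤ g x) : ConvexOn ℝ D g := by
  refine ⟨hD, fun x hx y hy a b ha hb hab => ?_⟩
  set z := a • x + b • y
  have hz : z ∈ D := hD hx hy ha hb hab
  have hbal : a • (x - z) + b • (y - z) = 0 := by
    obtain rfl : b = 1 - a := by linarith
    module
  have hℓz : a * ℓ z (x - z) + b * ℓ z (y - z) = 0 := by
    simpa using congrArg (ℓ z) hbal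
  have hxz := mul_le_mul_of_nonneg_left (hℓ x hx z hz) ha
  have hyz := mul_le_mul_of_nonneg_left (hℓ y hy z hz) hb
  have hgz : g z = a * g z + b * g z := by rw [← add_mul, hab, one_mul]
  simp only [smul_eq_mul]
  linarith

theorem convexOn_iff_forall_add_fderiv_sub_le (hD : Convex ℝ D)
    (hg : ∀ x ∈ D, DifferentiableAt ℝ g x) :
    ConvexOn ℝ D g ↔ ∀ x ∈ D, ∀ y ∈ D, g y + fderiv ℝ g y (x - y) ≤ g x :=
  ⟨fun hconv _ hx _ hy => hconv.add_fderiv_sub_le hx hy (hg _ hy),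
    ConvexOn.of_forall_add_le hD (fderiv ℝ g)⟩

end

theorem relative_smoothness_iff_general (d : ℕ) (D : Set (EuclideanSpace ℝ (Fin d)))
    (hDconv : Convex ℝ D)
    (f h : EuclideanSpace ℝ (Fin d) → ℝ)
    (hf : ∀ x ∈ D, DifferentiableAt ℝ f x)
    (hh : ∀ x ∈ D, DifferentiableAt ℝ h x)
    (L : ℝ) :
    ConvexOn ℝ D (fun x => L * h x - f x) ↔
      ∀ x ∈ D, ∀ y ∈ D,
        f x ≤ f y + ⟪gradient f y, x - y⟫
          + L * (h x - h y - ⟪gradient h y, x - y⟫) := by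
  rw [convexOn_iff_forall_add_fderiv_sub_le hDconv fun x hx =>
    ((hh x hx).const_mul L).fun_sub (hf x hx)]
  refine forall₂_congr fun x _ => forall₂_congr fun y hy => ?_
  rw [fderiv_fun_sub ((hh y hy).const_mul L) (hf y hy), fderiv_const_mul (hh y hy),
    inner_gradient_left, inner_gradient_left]
  simp only [sub_apply, smul_apply, smul_eq_mul]
  constructor <;> intro <;> linarith

/-- `L·h - f` is convex on an open convex set `D` iff `f` satisfies the
`L`-relative smoothness (descent/majorization) inequality w.r.t. `h` on `D`. -/
theorem relative_smoothness_iff (d : ℕ) (D : Set (EuclideanSpace ℝ (Fin d)))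
    (hDopen : IsOpen D) (hDconv : Convex ℝ D)
    (f h : EuclideanSpace ℝ (Fin d) → ℝ)
    (hf : ∀ x ∈ D, DifferentiableAt ℝ f x)
    (hh : ∀ x ∈ D, DifferentiableAt ℝ h x)
    (L : ℝ) (hL : 0 < L) :
    ConvexOn ℝ D (fun x => L * h x - f x) ↔
      ∀ x ∈ D, ∀ y ∈ D,
        f x ≤ f y + ⟪gradient f y, x - y⟫
          + L * (h x - h y - ⟪gradient h y, x - y⟫) :=
  relative_smoothness_iff_general d D hDconv f h hf hh L
end

section
/- Let φ : [0,∞) → ℝ be twice continuously differentiable with φ'' decreasing on [0,∞). Define c(t) = φ''(0) if t = 0 and c(t) = 2(φ(0) - φ(t) + φ'(t)·t)/t² otherwise. Then for every x ≥ 0 and t ≥ 0, φ(x) ≤ φ(t) + φ'(t)(x - t) + (1/2)c(t)(x - t)². -/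
/-! Let `g(y) = φ(t) + φ'(t)(y - t) + c(t)(y - t)²/2 - φ(y)`. Then `g(t) = g'(t) = 0` and
`g'' = c(t) - φ''` is nondecreasing on `[0, ∞)`, so `g'` is convex there.
For `t = 0` we even have `g'' ≥ g''(0) = 0`, so `g` increases from `g(0) = 0`.
For `t > 0`, `c(t)` is exactly the curvature making `g(0) = 0 = g(t)`. Rolle gives a zero
`ξ ∈ (0, t)` of `g'`, and a convex function vanishing at `ξ < t` is `≥ 0` on `[0, ξ]`, `≤ 0` on
`[ξ, t]` and `≥ 0` on `[t, ∞)`; hence `g` never drops below `g(0) = g(t) = 0`. -/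

open Set

section DerivSignPattern

variable {g : ℝ → ℝ} {a t x : ℝ}

theorem le_of_deriv_monotoneOn_Ici (hg : Differentiable ℝ g)
    (hmono : MonotoneOn (deriv g) (Ici a)) (hda : deriv g a = 0) (hx : a ≤ x) : g a ≤ g x := by
  refine monotoneOn_of_deriv_nonneg (convex_Ici a) hg.continuous.continuousOn
    hg.differentiableOn (fun y hy => ?_) self_mem_Ici hx hx
  rw [interior_Ici] at hy
  exact hda ▸ hmono self_mem_Ici (mem_Ici.2 hy.le) hy.le

theorem le_of_deriv_convexOn_Ici (hg : Differentiable ℝ g) (hconv : ConvexOn ℝ (Ici a) (deriv g))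
    (hat : a < t) (hga : g a = g t) (hdt : deriv g t = 0) (hx : a ≤ x) : g t ≤ g x := by
  obtain ⟨ξ, ⟨haξ, hξt⟩, hdξ⟩ := exists_deriv_eq_zero hat hg.continuous.continuousOn hga
  have hξ : ξ ∈ Ici a := haξ.le
  have ht : t ∈ Ici a := hat.le
  have hdξt : deriv g ξ = deriv g t := hdξ.trans hdt.symm
  rcases le_total x ξ with hxξ | hξx
  · rw [← hga]
    refine monotoneOn_of_deriv_nonneg (convex_Icc a ξ) hg.continuous.continuousOn
      hg.differentiableOn (fun y hy => ?_) ⟨le_rfl, haξ.le⟩ ⟨hx, hxξ⟩ hx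
    rw [interior_Icc] at hy
    rw [← hdξ]
    exact hconv.le_left_of_right_le'' (mem_Ici.2 hy.1.le) ht hy.2.le hξt hdξt.ge
  rcases le_total x t with hxt | htx
  · refine antitoneOn_of_deriv_nonpos (convex_Icc ξ t) hg.continuous.continuousOn
      hg.differentiableOn (fun y hy => ?_) ⟨hξx, hxt⟩ ⟨hξt.le, le_rfl⟩ hxt
    rw [interior_Icc] at hy
    have hy' : y ∈ segment ℝ ξ t := by rw [segment_eq_Icc hξt.le]; exact ⟨hy.1.le, hy.2.le⟩
    simpa [hdξ, hdt] using hconv.le_on_segment hξ ht hy'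
  · refine monotoneOn_of_deriv_nonneg (convex_Ici t) hg.continuous.continuousOn
      hg.differentiableOn (fun y hy => ?_) self_mem_Ici htx htx
    rw [interior_Ici] at hy
    rw [← hdt]
    exact hconv.le_right_of_left_le'' hξ (mem_Ici.2 (hat.le.trans hy.le)) hξt hy.le hdξt.le

end DerivSignPattern

section QuadraticGap

variable {φ : ℝ → ℝ} {k t : ℝ}

noncomputable def quadraticGap (φ : ℝ → ℝ) (k t y : ℝ) : ℝ :=
  φ t + deriv φ t * (y - t) + 1 / 2 * k * (y - t) ^ 2 - φ y

theorem hasDerivAt_quadraticGap (hφ : Differentiable ℝ φ) (y : ℝ) :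
    HasDerivAt (quadraticGap φ k t) (deriv φ t + k * (y - t) - deriv φ y) y := by
  have hlin := (hasDerivAt_id' y).sub_const t
  refine ((((hlin.const_mul (deriv φ t)).const_add (φ t)).fun_add
    ((hlin.fun_pow 2).const_mul (1 / 2 * k))).fun_sub (hφ y).hasDerivAt).congr_deriv ?_
  simp only [Nat.cast_ofNat, Nat.add_one_sub_one, pow_one]
  ring

theorem differentiable_quadraticGap (hφ : Differentiable ℝ φ) :
    Differentiable ℝ (quadraticGap φ k t) :=
  fun y => (hasDerivAt_quadraticGap hφ y).differentiableAt

theorem deriv_quadraticGap (hφ : Differentiable ℝ φ) :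
    deriv (quadraticGap φ k t) = fun y => deriv φ t + k * (y - t) - deriv φ y :=
  funext fun y => (hasDerivAt_quadraticGap hφ y).deriv

theorem hasDerivAt_deriv_quadraticGap (hφ : Differentiable ℝ φ)
    (hφ' : Differentiable ℝ (deriv φ)) (y : ℝ) :
    HasDerivAt (deriv (quadraticGap φ k t)) (k - deriv (deriv φ) y) y := by
  rw [deriv_quadraticGap hφ]
  simpa using ((((hasDerivAt_id' y).sub_const t).const_mul k).const_add (deriv φ t)).fun_sub
    (hφ' y).hasDerivAt

theorem monotoneOn_deriv_quadraticGap {D : Set ℝ} (hD : Convex ℝ D) (hφ : Differentiable ℝ φ)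
    (hφ' : Differentiable ℝ (deriv φ)) (hk : ∀ y ∈ D, deriv (deriv φ) y ≤ k) :
    MonotoneOn (deriv (quadraticGap φ k t)) D := by
  have hd := fun y => hasDerivAt_deriv_quadraticGap (k := k) (t := t) hφ hφ' y
  refine monotoneOn_of_deriv_nonneg hD (fun y _ => (hd y).continuousAt.continuousWithinAt)
    (fun y _ => (hd y).differentiableAt.differentiableWithinAt) fun y hy => ?_
  rw [(hd y).deriv, sub_nonneg]
  exact hk y (interior_subset hy)

theorem convexOn_deriv_quadraticGap {D : Set ℝ} (hD : Convex ℝ D) (hφ : Differentiable ℝ φ)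
    (hφ' : Differentiable ℝ (deriv φ)) (hanti : AntitoneOn (deriv (deriv φ)) D) :
    ConvexOn ℝ D (deriv (quadraticGap φ k t)) := by
  have hd := fun y => hasDerivAt_deriv_quadraticGap (k := k) (t := t) hφ hφ' y
  refine MonotoneOn.convexOn_of_deriv hD (fun y _ => (hd y).continuousAt.continuousWithinAt)
    (fun y _ => (hd y).differentiableAt.differentiableWithinAt) fun u hu v hv huv => ?_
  rw [(hd u).deriv, (hd v).deriv]
  exact sub_le_sub_left (hanti (interior_subset hu) (interior_subset hv) huv) k

end QuadraticGap

/-- Quadratic majorant lemma: if `φ` is `C²` with nonincreasing second derivative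
on `[0,∞)`, then with curvature `c(t) = φ''(0)` for `t = 0` and
`c(t) = 2(φ(0) - φ(t) + φ'(t)·t)/t²` for `t > 0`, one has
`φ(x) ≤ φ(t) + φ'(t)(x - t) + (1/2) c(t) (x - t)²` for all `x, t ≥ 0`. -/
theorem quadratic_majorant (φ : ℝ → ℝ) (hφ : ContDiff ℝ 2 φ)
    (hanti : AntitoneOn (deriv (deriv φ)) (Set.Ici 0))
    (c : ℝ → ℝ) (hc0 : c 0 = deriv (deriv φ) 0)
    (hct : ∀ t : ℝ, 0 < t → c t = 2 * (φ 0 - φ t + deriv φ t * t) / t ^ 2) :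
    ∀ x : ℝ, 0 ≤ x → ∀ t : ℝ, 0 ≤ t →
      φ x ≤ φ t + deriv φ t * (x - t) + (1 / 2) * c t * (x - t) ^ 2 := by
  intro x hx t ht
  have hφ1 : Differentiable ℝ φ := hφ.differentiable (by norm_num)
  have hφ2 : Differentiable ℝ (deriv φ) := hφ.differentiable_deriv_two
  have hdt : deriv (quadraticGap φ (c t) t) t = 0 := by simp [deriv_quadraticGap hφ1]
  suffices quadraticGap φ (c t) t t ≤ quadraticGap φ (c t) t x by
    simp only [quadraticGap] at this; linarith
  rcases ht.eq_or_lt with rfl | htpos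
  · refine le_of_deriv_monotoneOn_Ici (differentiable_quadraticGap hφ1)
      (monotoneOn_deriv_quadraticGap (convex_Ici 0) hφ1 hφ2 fun y hy => ?_) hdt hx
    exact hc0 ▸ hanti self_mem_Ici hy hy
  · refine le_of_deriv_convexOn_Ici (differentiable_quadraticGap hφ1)
      (convexOn_deriv_quadraticGap (convex_Ici 0) hφ1 hφ2 hanti) htpos ?_ hdt hx
    simp only [quadraticGap, hct t htpos]
    field_simp
    ring
end

section
/- For every t > 0, the second derivative of log Γ at t+1 equals ∑_{ℓ=0}^∞ 1/(t+1+ℓ)². -/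
/-!
Write `ψ` for the derivative of `log ∘ Γ`. The functional equation gives
`ψ (x + 1) = ψ x + 1 / x`, and convexity of `log ∘ Γ` traps `ψ x` between the slopes
`log (x - 1)` and `log x` of its chords, so `ψ (x + a) - ψ x → 0` as `x → ∞`. Telescoping
therefore yields `ψ x - ψ y = ∑ k, (1 / (y + k) - 1 / (x + k))`, a series that may be
differentiated termwise in `x` because its derivatives `1 / (x + k) ^ 2` are dominated by
`1 / (x₀ / 2 + k) ^ 2` near `x₀`.
-/

open Filter Topology Set

namespace Real

local notation "ψ" => deriv fun s : ℝ => log (Gamma s)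

lemma summable_one_div_add_nat_sq (a : ℝ) : Summable fun k : ℕ => 1 / (a + k) ^ 2 := by
  simpa [add_comm, rpow_two, sq_abs] using (summable_one_div_nat_add_rpow a 2).mpr one_lt_two

lemma log_Gamma_add_one {x : ℝ} (hx : 0 < x) :
    log (Gamma (x + 1)) = log (Gamma x) + log x := by
  rw [Gamma_add_one hx.ne', log_mul hx.ne' (Gamma_pos_of_pos hx).ne', add_comm]

lemma differentiableAt_log_Gamma {x : ℝ} (hx : 0 < x) :
    DifferentiableAt ℝ (fun s => log (Gamma s)) x :=
  (differentiableAt_Gamma fun m => ((neg_nonpos.2 m.cast_nonneg).trans_lt hx).ne').log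
    (Gamma_pos_of_pos hx).ne'

lemma deriv_log_Gamma_add_one {x : ℝ} (hx : 0 < x) : ψ (x + 1) = ψ x + x⁻¹ := by
  rw [← deriv_comp_add_const, ← deriv_log,
    ← deriv_add (differentiableAt_log_Gamma hx) (differentiableAt_log hx.ne')]
  apply EventuallyEq.deriv_eq
  filter_upwards [eventually_gt_nhds hx] with z hz using log_Gamma_add_one hz

lemma deriv_log_Gamma_add_nat {x : ℝ} (hx : 0 < x) (n : ℕ) :
    ψ (x + n) = ψ x + ∑ k ∈ Finset.range n, (x + k)⁻¹ := by
  induction n with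
  | zero => simp
  | succ n ih =>
    rw [Nat.cast_succ, ← add_assoc, deriv_log_Gamma_add_one (by positivity), ih,
      Finset.sum_range_succ, add_assoc]

lemma log_sub_one_le_deriv_log_Gamma {x : ℝ} (hx : 1 < x) : log (x - 1) ≤ ψ x := by
  have hx₁ : 0 < x - 1 := sub_pos.2 hx
  refine (le_of_eq ?_).trans <| convexOn_log_Gamma.slope_le_deriv (mem_Ioi.2 hx₁)
    (mem_Ioi.2 (by linarith)) (by linarith) (differentiableAt_log_Gamma (by linarith))
  rw [slope_def_field, sub_sub_cancel, div_one, Function.comp_apply, Function.comp_apply,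
    eq_sub_iff_add_eq', ← log_Gamma_add_one hx₁, sub_add_cancel]

lemma deriv_log_Gamma_le_log {x : ℝ} (hx : 0 < x) : ψ x ≤ log x := by
  refine (convexOn_log_Gamma.deriv_le_slope (mem_Ioi.2 hx) (mem_Ioi.2 (by linarith))
    (lt_add_one x) (differentiableAt_log_Gamma hx)).trans (le_of_eq ?_)
  rw [slope_def_field, add_sub_cancel_left, div_one, Function.comp_apply, Function.comp_apply,
    log_Gamma_add_one hx, add_sub_cancel_left]

lemma tendsto_deriv_log_Gamma_sub_log : Tendsto (fun x => ψ x - log x) atTop (𝓝 0) := by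
  refine tendsto_of_tendsto_of_tendsto_of_le_of_le' (tendsto_log_comp_add_sub_log (-1))
    tendsto_const_nhds ?_ ?_
  · filter_upwards [eventually_gt_atTop 1] with x hx
    simpa [← sub_eq_add_neg] using log_sub_one_le_deriv_log_Gamma hx
  · filter_upwards [eventually_gt_atTop 0] with x hx
    exact sub_nonpos.2 (deriv_log_Gamma_le_log hx)

lemma tendsto_deriv_log_Gamma_add_sub (a : ℝ) :
    Tendsto (fun x => ψ (x + a) - ψ x) atTop (𝓝 0) := by
  have h := ((tendsto_deriv_log_Gamma_sub_log.comp
    (tendsto_atTop_add_const_right _ a tendsto_id)).sub tendsto_deriv_log_Gamma_sub_log).add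
    (tendsto_log_comp_add_sub_log a)
  simp only [sub_zero, add_zero] at h
  refine h.congr fun x => ?_
  simp only [Function.comp_apply, id]
  ring

lemma tendsto_sum_range_inv_sub_inv {x y : ℝ} (hx : 0 < x) (hy : 0 < y) :
    Tendsto (fun n : ℕ => ∑ k ∈ Finset.range n, ((y + k)⁻¹ - (x + k)⁻¹)) atTop
      (𝓝 (ψ x - ψ y)) := by
  have h := ((tendsto_deriv_log_Gamma_add_sub (y - x)).comp
    (tendsto_atTop_add_const_left _ x tendsto_natCast_atTop_atTop)).const_add (ψ x - ψ y)
  rw [add_zero] at h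
  refine h.congr fun n => ?_
  simp only [Function.comp_apply, Finset.sum_sub_distrib]
  rw [show x + n + (y - x) = y + n by ring, deriv_log_Gamma_add_nat hx,
    deriv_log_Gamma_add_nat hy]
  ring

theorem hasDerivAt_deriv_log_Gamma {x : ℝ} (hx : 0 < x) :
    HasDerivAt ψ (∑' k : ℕ, 1 / (x + k) ^ 2) x := by
  have hxU : x ∈ Ioi (x / 2) := mem_Ioi.2 (half_lt_self hx)
  have hderiv (k : ℕ) (z : ℝ) (hz : z ∈ Ioi (x / 2)) :
      HasDerivAt (fun z : ℝ => (x + k)⁻¹ - (z + k)⁻¹) (1 / (z + k) ^ 2) z := by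
    have hzk : z + k ≠ 0 := by have : 0 < z := (half_pos hx).trans hz; positivity
    simpa [neg_div] using
      (((hasDerivAt_id z).add_const (k : ℝ)).inv hzk).const_sub (x + k)⁻¹
  have hbound (k : ℕ) (z : ℝ) (hz : z ∈ Ioi (x / 2)) :
      ‖1 / (z + k) ^ 2‖ ≤ 1 / (x / 2 + k) ^ 2 := by
    have hz' : x / 2 < z := hz
    rw [norm_of_nonneg (by positivity)]
    gcongr
  have hsum₀ : Summable fun k : ℕ => (x + k)⁻¹ - (x + k)⁻¹ := by simp [summable_zero]
  have hseries :
      ψ =ᶠ[𝓝 x] fun z : ℝ => ψ x + ∑' k : ℕ, ((x + k)⁻¹ - (z + k)⁻¹) := by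
    filter_upwards [isOpen_Ioi.mem_nhds hxU] with z hz
    have hS := summable_of_summable_hasDerivAt_of_isPreconnected
      (summable_one_div_add_nat_sq _) isOpen_Ioi isPreconnected_Ioi hderiv hbound hxU hsum₀ hz
    rw [tendsto_nhds_unique hS.hasSum.tendsto_sum_nat
      (tendsto_sum_range_inv_sub_inv ((half_pos hx).trans hz) hx)]
    ring
  refine (HasDerivAt.const_add (ψ x) ?_).congr_of_eventuallyEq hseries
  exact hasDerivAt_tsum_of_isPreconnected (summable_one_div_add_nat_sq _) isOpen_Ioi
    isPreconnected_Ioi hderiv hbound hxU hsum₀ hxU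

end Real

/-- Series representation of the trigamma function: for `t > 0`, the second
derivative of `log Γ` at `t + 1` equals `∑_{ℓ=0}^∞ 1/(t+1+ℓ)²`. -/
theorem trigamma_series (t : ℝ) (ht : 0 < t) :
    deriv (deriv (fun s : ℝ => Real.log (Real.Gamma s))) (t + 1)
      = ∑' ℓ : ℕ, 1 / (t + 1 + (ℓ : ℝ)) ^ 2 :=
  (Real.hasDerivAt_deriv_log_Gamma (by positivity)).deriv
end

section
/- For every α > 0 there exists θ ∈ (0,1) such that Γ(α) = √(2π) · α^{α - 1/2} · exp(-α + θ/(12α)). -/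
/-!
Write `μ(x) = log Γ(x) - ((x - 1/2) log x - x + log √(2π))`. Since `Γ(x + 1) = x Γ(x)`,
`μ(x) - μ(x + 1) = (x + 1/2) log (1 + 1/x) - 1 = ∑_{k ≥ 1} t^{2k} / (2k + 1)` with
`t = 1/(2x + 1)`; comparing with the geometric series `∑ t^{2k} / 3` puts this strictly between
`0` and `1/(12x) - 1/(12(x + 1))`. Euler's limit for `Γ` and Stirling's formula for `n!` give
`μ(x + n) → 0`, so telescoping yields `0 < μ(x) < 1/(12x)`, and `θ = 12 x μ(x)` works.
-/

open Real Filter Topology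

theorem hasSum_add_half_mul_log_one_add_inv_sub_one {x : ℝ} (hx : 0 < x) :
    HasSum (fun k : ℕ => 1 / (2 * (k + 1 : ℝ) + 1) * ((1 / (2 * x + 1)) ^ 2) ^ (k + 1))
      ((x + 1 / 2) * log (1 + x⁻¹) - 1) := by
  let f (k : ℕ) : ℝ := 1 / (2 * k + 1) * ((1 / (2 * x + 1)) ^ 2) ^ k
  have hf : HasSum f ((x + 1 / 2) * log (1 + x⁻¹)) :=
    ((hasSum_log_one_add_inv hx).mul_left (x + 1 / 2)).congr_fun fun k => by
      simp only [f]
      rw [← pow_mul, pow_succ]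
      field
  simpa [f] using (hasSum_nat_add_iff' 1).mpr hf

theorem add_half_mul_log_one_add_inv_sub_one_pos {x : ℝ} (hx : 0 < x) :
    0 < (x + 1 / 2) * log (1 + x⁻¹) - 1 :=
  hasSum_lt (f := 0) (i := 0) (fun k => by positivity) (by positivity) hasSum_zero
    (hasSum_add_half_mul_log_one_add_inv_sub_one hx)

theorem add_half_mul_log_one_add_inv_sub_one_lt {x : ℝ} (hx : 0 < x) :
    (x + 1 / 2) * log (1 + x⁻¹) - 1 < 1 / (12 * x) - 1 / (12 * (x + 1)) := by
  have hseries := hasSum_add_half_mul_log_one_add_inv_sub_one hx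
  set r : ℝ := (1 / (2 * x + 1)) ^ 2 with hr
  have hr0 : 0 < r := by positivity
  have hr1 : 1 - r = 4 * x * (x + 1) * r := by rw [hr]; field_simp; ring
  have hgeom : HasSum (fun k : ℕ => 1 / 3 * r ^ (k + 1)) (1 / (12 * x) - 1 / (12 * (x + 1))) := by
    have hlt : r < 1 := by linarith [show 0 < 4 * x * (x + 1) * r by positivity]
    have hsum : r / 3 * (1 - r)⁻¹ = 1 / (12 * x) - 1 / (12 * (x + 1)) := by
      rw [hr1]; field_simp; ring
    rw [← hsum]
    exact ((hasSum_geometric_of_lt_one hr0.le hlt).mul_left (r / 3)).congr_fun fun k => by ring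
  clear_value r
  -- the coefficients `1 / (2k + 3)` are at most `1 / 3`, strictly so from `k = 1` on
  refine hasSum_lt (i := 1) (fun k => ?_) ?_ hseries hgeom
  · gcongr
    linarith [k.cast_nonneg (α := ℝ)]
  · norm_num
    nlinarith [pow_pos hr0 2]

theorem tendsto_log_factorial_sub_stirling :
    Tendsto (fun n : ℕ => log n.factorial - ((n + 1 / 2) * log n - n + log (2 * π) / 2))
      atTop (𝓝 0) := by
  have h := (Stirling.tendsto_stirlingSeq_sqrt_pi.log (sqrt_pos.2 pi_pos).ne').sub_const
    (log √π)
  rw [sub_self] at h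
  refine h.congr' ?_
  filter_upwards [eventually_ne_atTop 0] with n hn
  have hn : (n : ℝ) ≠ 0 := by exact_mod_cast hn
  rw [Stirling.log_stirlingSeq_formula, log_sqrt pi_pos.le, log_mul two_ne_zero hn,
    log_div hn (exp_pos 1).ne', log_exp, log_mul two_ne_zero pi_pos.ne']
  ring

theorem tendsto_add_mul_log_one_add_div (b x : ℝ) :
    Tendsto (fun n : ℕ => (n + b) * log (1 + x / n)) atTop (𝓝 x) := by
  have hmul : Tendsto (fun n : ℕ => n * log (1 + x / n)) atTop (𝓝 x) := by
    refine Real.tendsto_nat_mul_log_one_add_of_tendsto (tendsto_const_nhds.congr' ?_)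
    filter_upwards [eventually_ne_atTop 0] with n hn
    field_simp
  have hlog : Tendsto (fun n : ℕ => log (1 + x / n)) atTop (𝓝 0) := by
    simpa using ((tendsto_const_div_atTop_nhds_zero_nat x).const_add 1).log (by norm_num)
  simpa [add_mul] using hmul.add (hlog.const_mul b)

noncomputable def stirlingRemainder (x : ℝ) : ℝ :=
  log (Gamma x) - ((x - 1 / 2) * log x - x + log (2 * π) / 2)

theorem Gamma_eq_stirling_mul_exp_stirlingRemainder {x : ℝ} (hx : 0 < x) :
    Gamma x = √(2 * π) * x ^ (x - 1 / 2) * exp (-x + stirlingRemainder x) := by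
  rw [sqrt_eq_rpow, rpow_def_of_pos (by positivity), rpow_def_of_pos hx, ← exp_add, ← exp_add,
    stirlingRemainder, log_mul two_ne_zero pi_pos.ne']
  conv_lhs => rw [← exp_log (Gamma_pos_of_pos hx)]
  congr 1
  ring

theorem stirlingRemainder_sub_stirlingRemainder_add_one {x : ℝ} (hx : 0 < x) :
    stirlingRemainder x - stirlingRemainder (x + 1) = (x + 1 / 2) * log (1 + x⁻¹) - 1 := by
  have hlog : log (1 + x⁻¹) = log (x + 1) - log x := by
    rw [← log_div (by positivity) hx.ne']
    congr 1
    field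
  rw [stirlingRemainder, stirlingRemainder, Gamma_add_one hx.ne',
    log_mul hx.ne' (Gamma_pos_of_pos hx).ne', hlog]
  ring

theorem tendsto_stirlingRemainder_add_nat {x : ℝ} (hx : 0 < x) :
    Tendsto (fun n : ℕ => stirlingRemainder (x + n)) atTop (𝓝 0) := by
  have hlim := (((BohrMollerup.tendsto_log_gamma hx).const_sub (log (Gamma x))).add
    tendsto_log_factorial_sub_stirling).add
    ((tendsto_add_mul_log_one_add_div (x + 1 / 2) x).const_sub x)
  rw [sub_self, sub_self, add_zero, add_zero] at hlim
  refine hlim.congr' ?_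
  filter_upwards [eventually_ne_atTop 0] with n hn
  have hn : (0 : ℝ) < n := by positivity
  have hlogGamma : log (Gamma (x + n)) = log (Gamma x) + ∑ m ∈ Finset.range n, log (x + m) :=
    BohrMollerup.f_add_nat_eq (f := log ∘ Gamma) (fun hy => by
      simp only [Function.comp_apply]
      rw [Gamma_add_one hy.ne', log_mul hy.ne' (Gamma_pos_of_pos hy).ne', add_comm]) hx n
  have hlog : log (1 + x / n) = log (x + n) - log n := by
    rw [← log_div (by positivity) hn.ne']
    congr 1
    field
  rw [stirlingRemainder, hlogGamma, BohrMollerup.logGammaSeq, Finset.sum_range_succ, hlog]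
  ring

theorem stirlingRemainder_nonneg {x : ℝ} (hx : 0 < x) : 0 ≤ stirlingRemainder x := by
  have hanti : Antitone fun n : ℕ => stirlingRemainder (x + n) :=
    antitone_nat_of_succ_le fun n => by
      have hxn : 0 < x + n := by positivity
      have hstep := stirlingRemainder_sub_stirlingRemainder_add_one hxn
      have hpos := add_half_mul_log_one_add_inv_sub_one_pos hxn
      push_cast
      rw [← add_assoc]
      linarith
  simpa using hanti.le_of_tendsto (tendsto_stirlingRemainder_add_nat hx) 0

theorem stirlingRemainder_le {x : ℝ} (hx : 0 < x) : stirlingRemainder x ≤ 1 / (12 * x) := by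
  have hmono : Monotone fun n : ℕ => stirlingRemainder (x + n) - 1 / (12 * (x + n)) :=
    monotone_nat_of_le_succ fun n => by
      have hxn : 0 < x + n := by positivity
      have hstep := stirlingRemainder_sub_stirlingRemainder_add_one hxn
      have hlt := add_half_mul_log_one_add_inv_sub_one_lt hxn
      push_cast
      rw [← add_assoc]
      linarith
  have hinv : Tendsto (fun n : ℕ => 1 / (12 * (x + n))) atTop (𝓝 0) :=
    tendsto_const_nhds.div_atTop <| Tendsto.const_mul_atTop (by norm_num) <|
      tendsto_atTop_add_const_left _ x tendsto_natCast_atTop_atTop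
  have hlim := (tendsto_stirlingRemainder_add_nat hx).sub hinv
  rw [sub_zero] at hlim
  simpa using hmono.ge_of_tendsto hlim 0

theorem stirlingRemainder_mem_Ioo {x : ℝ} (hx : 0 < x) :
    stirlingRemainder x ∈ Set.Ioo 0 (1 / (12 * x)) := by
  have hstep := stirlingRemainder_sub_stirlingRemainder_add_one hx
  have hpos := add_half_mul_log_one_add_inv_sub_one_pos hx
  have hlt := add_half_mul_log_one_add_inv_sub_one_lt hx
  have hnonneg := stirlingRemainder_nonneg (x := x + 1) (by positivity)
  have hle := stirlingRemainder_le (x := x + 1) (by positivity)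
  constructor <;> linarith

/-- Stirling's formula with explicit error term: for every `α > 0` there is
`θ ∈ (0,1)` with `Γ(α) = √(2π) α^{α-1/2} exp(-α + θ/(12α))`. -/
theorem stirling_gamma (α : ℝ) (hα : 0 < α) :
    ∃ θ ∈ Set.Ioo (0 : ℝ) 1,
      Real.Gamma α
        = Real.sqrt (2 * π) * α ^ (α - 1 / 2) * Real.exp (-α + θ / (12 * α)) := by
  obtain ⟨hpos, hlt⟩ := stirlingRemainder_mem_Ioo hα
  rw [lt_div_iff₀ (by positivity)] at hlt
  refine ⟨12 * α * stirlingRemainder α, ⟨by positivity, by linarith⟩, ?_⟩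
  rw [mul_div_cancel_left₀ _ (by positivity), Gamma_eq_stirling_mul_exp_stirlingRemainder hα]
end

section
/- As α = (α_1,...,α_d) → 0 in (0,∞)^d, one has Γ(α_1)⋯Γ(α_d)/Γ(α_1 + ⋯ + α_d) ~ ∑_{i=1}^d 1/∏_{j≠i} α_j; in particular, G(α) := ∑_i log Γ(α_i) - log Γ(∑_i α_i) tends to +∞ as α → 0. -/
/-!
Since `Γ(a) = Γ(a + 1) / a`, the ratio `∏ Γ(αᵢ) / Γ(∑ αᵢ)` factors as
`(∏ Γ(αᵢ + 1) / Γ(∑ αᵢ + 1)) · (∑ αᵢ / ∏ αᵢ)`. The first factor is continuous at `α = 0` with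
value `1`, and `∑ αᵢ / ∏ αᵢ = ∑ᵢ 1 / ∏_{j ≠ i} αⱼ`. For `d ≥ 2` every term of this sum blows up,
so the ratio, and with it its logarithm `G`, tends to `+∞`.
-/

open Finset Filter Topology Asymptotics

section
variable {ι : Type*} [Fintype ι]

lemma sum_one_div_prod_erase_eq_sum_div_prod {K : Type*} [Field K] [DecidableEq ι] {α : ι → K}
    (hα : ∀ i, α i ≠ 0) : ∑ i, 1 / ∏ j ∈ univ.erase i, α j = (∑ i, α i) / ∏ i, α i := by
  rw [sum_div]
  refine sum_congr rfl fun i _ => ?_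
  rw [← mul_prod_erase univ α (mem_univ i)]
  field_simp [hα i]

lemma prod_gamma_div_gamma_sum_eq [Nonempty ι] {α : ι → ℝ} (hα : ∀ i, 0 < α i) :
    (∏ i, Real.Gamma (α i)) / Real.Gamma (∑ i, α i) =
      (∏ i, Real.Gamma (α i + 1)) / Real.Gamma (∑ i, α i + 1) * ((∑ i, α i) / ∏ i, α i) := by
  have hsum : 0 < ∑ i, α i := sum_pos (fun i _ => hα i) univ_nonempty
  have hprod : 0 < ∏ i, α i := prod_pos fun i _ => hα i
  rw [Real.Gamma_add_one hsum.ne', prod_congr rfl fun i _ => Real.Gamma_add_one (hα i).ne',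
    prod_mul_distrib]
  field_simp

lemma log_prod_gamma_div_gamma_sum [Nonempty ι] {α : ι → ℝ} (hα : ∀ i, 0 < α i) :
    Real.log ((∏ i, Real.Gamma (α i)) / Real.Gamma (∑ i, α i)) =
      ∑ i, Real.log (Real.Gamma (α i)) - Real.log (Real.Gamma (∑ i, α i)) := by
  have hΓ : ∀ i, 0 < Real.Gamma (α i) := fun i => Real.Gamma_pos_of_pos (hα i)
  have hΓsum : 0 < Real.Gamma (∑ i, α i) :=
    Real.Gamma_pos_of_pos (sum_pos (fun i _ => hα i) univ_nonempty)
  rw [Real.log_div (prod_pos fun i _ => hΓ i).ne' hΓsum.ne',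
    Real.log_prod fun i _ => (hΓ i).ne']

lemma tendsto_prod_gamma_add_one_div_gamma_sum_add_one :
    Tendsto (fun α : ι → ℝ => (∏ i, Real.Gamma (α i + 1)) / Real.Gamma (∑ i, α i + 1))
      (𝓝 0) (𝓝 1) := by
  have hΓ : Tendsto Real.Gamma (𝓝 (0 + 1)) (𝓝 1) := by
    simpa [Real.Gamma_one] using (Real.differentiableAt_Gamma (s := 1) fun m => by
      linarith [(m.cast_nonneg : (0 : ℝ) ≤ m)]).continuousAt.tendsto
  have hshift : ∀ {x : (ι → ℝ) → ℝ}, Tendsto x (𝓝 0) (𝓝 0) →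
      Tendsto (fun α => Real.Gamma (x α + 1)) (𝓝 0) (𝓝 1) := fun hx =>
    hΓ.comp (hx.add_const 1)
  have hcoord : ∀ i, Tendsto (fun α : ι → ℝ => α i) (𝓝 0) (𝓝 0) := fun i =>
    (continuous_apply i).tendsto 0
  have hsum : Tendsto (fun α : ι → ℝ => ∑ i, α i) (𝓝 0) (𝓝 0) := by
    simpa using tendsto_finsetSum univ fun i _ => hcoord i
  simpa [Pi.div_def] using
    (tendsto_finsetProd univ fun i _ => hshift (hcoord i)).div (hshift hsum) one_ne_zero

lemma tendsto_sum_one_div_prod_erase_atTop [Nontrivial ι] [DecidableEq ι] :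
    Tendsto (fun α : ι → ℝ => ∑ i, 1 / ∏ j ∈ univ.erase i, α j)
      (𝓝[{α | ∀ i, 0 < α i}] 0) atTop := by
  obtain ⟨i₀, j₀, hne⟩ := exists_pair_ne ι
  have hpos : ∀ᶠ α : ι → ℝ in 𝓝[{α | ∀ i, 0 < α i}] 0, ∀ i, 0 < α i := self_mem_nhdsWithin
  have hprod : Tendsto (fun α : ι → ℝ => ∏ j ∈ univ.erase i₀, α j)
      (𝓝[{α | ∀ i, 0 < α i}] 0) (𝓝[>] 0) := by
    refine tendsto_nhdsWithin_iff.mpr ⟨?_, hpos.mono fun α hα => prod_pos fun j _ => hα j⟩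
    have hcont : Tendsto (fun α : ι → ℝ => ∏ j ∈ univ.erase i₀, α j) (𝓝[{α | ∀ i, 0 < α i}] 0)
        (𝓝 (∏ j ∈ univ.erase i₀, (0 : ι → ℝ) j)) :=
      ((continuous_finsetProd _ fun j _ => continuous_apply j).tendsto 0).mono_left
        nhdsWithin_le_nhds
    rwa [prod_eq_zero (mem_erase.mpr ⟨hne.symm, mem_univ j₀⟩) rfl] at hcont
  have hterm : Tendsto (fun α : ι → ℝ => 1 / ∏ j ∈ univ.erase i₀, α j)
      (𝓝[{α | ∀ i, 0 < α i}] 0) atTop := by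
    simpa [one_div, Function.comp_def] using tendsto_inv_nhdsGT_zero.comp hprod
  refine tendsto_atTop_mono' _ ?_ hterm
  filter_upwards [hpos] with α hα
  exact single_le_sum (f := fun i => 1 / ∏ j ∈ univ.erase i, α j)
    (fun i _ => one_div_nonneg.mpr (prod_pos fun j _ => hα j).le) (mem_univ i₀)

end

/-- As `α → 0` in the positive orthant,
`Γ(α₁)⋯Γ(α_d)/Γ(α₁+⋯+α_d) ~ ∑ᵢ 1/∏_{j≠i} αⱼ`, and consequently
`G(α) = ∑ᵢ log Γ(αᵢ) - log Γ(∑ᵢ αᵢ)` tends to `+∞`. -/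
theorem gamma_ratio_asymptotics (d : ℕ) (hd : 2 ≤ d) :
    Asymptotics.IsEquivalent
        (nhdsWithin (0 : Fin d → ℝ) {α | ∀ i, 0 < α i})
        (fun α : Fin d → ℝ => (∏ i, Real.Gamma (α i)) / Real.Gamma (∑ i, α i))
        (fun α : Fin d → ℝ => ∑ i, 1 / ∏ j ∈ Finset.univ.erase i, α j) ∧
    Tendsto
        (fun α : Fin d → ℝ =>
          ∑ i, Real.log (Real.Gamma (α i)) - Real.log (Real.Gamma (∑ i, α i)))
        (nhdsWithin (0 : Fin d → ℝ) {α | ∀ i, 0 < α i}) atTop := by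
  have : Nontrivial (Fin d) := Fin.nontrivial_iff_two_le.mpr hd
  have hpos : ∀ᶠ α : Fin d → ℝ in 𝓝[{α | ∀ i, 0 < α i}] 0, ∀ i, 0 < α i := self_mem_nhdsWithin
  have hequiv : (fun α : Fin d → ℝ => (∏ i, Real.Gamma (α i)) / Real.Gamma (∑ i, α i))
      ~[𝓝[{α | ∀ i, 0 < α i}] 0] fun α => ∑ i, 1 / ∏ j ∈ univ.erase i, α j := by
    refine isEquivalent_iff_exists_eq_mul.mpr ⟨_,
      tendsto_prod_gamma_add_one_div_gamma_sum_add_one.mono_left nhdsWithin_le_nhds, ?_⟩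
    filter_upwards [hpos] with α hα
    rw [Pi.mul_apply, prod_gamma_div_gamma_sum_eq hα,
      sum_one_div_prod_erase_eq_sum_div_prod fun i => (hα i).ne']
  refine ⟨hequiv, ?_⟩
  refine (Real.tendsto_log_atTop.comp
    (hequiv.symm.tendsto_atTop tendsto_sum_one_div_prod_erase_atTop)).congr' ?_
  filter_upwards [hpos] with α hα using log_prod_gamma_div_gamma_sum hα
end

section
/- Let F = f + g with f convex differentiable on an open set D ⊆ ℝ^d, g proper convex lsc with dom g ⊆ D, and let h_y (y ∈ D) be strictly convex differentiable Bregman functions satisfying the majorization property f(x) ≤ f(y) + ⟨∇f(y), x-y⟩ + D_{h_y}(x,y) for all x ∈ D. If x⁺ minimizes x ↦ g(x) + ⟨∇f(y), x⟩ + D_{h_y}(x, y), then for every v ∈ D: F(x⁺) - F(v) ≤ D_{h_y}(v, y) - D_{h_y}(v, x⁺) - D_f(v, y). -/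
open scoped RealInnerProductSpace

open Filter Topology Set

/-!
Testing the minimality of `x⁺` at the points `x⁺ + t • (v - x⁺)` of the segment towards `v`,
and bounding `g` there by convexity, gives as `t → 0⁺` the variational inequality
`g x⁺ ≤ g v + ⟪∇f(y) + ∇h(x⁺) - ∇h(y), v - x⁺⟫`. The three-point identity of Bregman
divergences turns `⟪∇h(x⁺) - ∇h(y), v - x⁺⟫` into `D_h(v,y) - D_h(v,x⁺) - D_h(x⁺,y)`, and the
majorization property at `x⁺` absorbs `D_h(x⁺,y)`. In `EReal` the claim is trivial when
`g x⁺ = ⊥` or `g v = ⊤`; otherwise minimality forces both values to be finite.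
-/

theorem HasLineDerivAt.le_of_eventually_mul_le_sub {E : Type*} [AddCommGroup E] [Module ℝ E]
    {φ : E → ℝ} {x w : E} {φ' c : ℝ} (hφ : HasLineDerivAt ℝ φ φ' x w)
    (hc : ∀ᶠ t in 𝓝[>] (0 : ℝ), t * c ≤ φ (x + t • w) - φ x) : c ≤ φ' := by
  refine ge_of_tendsto hφ.tendsto_slope_zero_right ?_
  filter_upwards [hc, self_mem_nhdsWithin] with t hct (ht : 0 < t)
  rw [smul_eq_mul, ← div_eq_inv_mul, le_div_iff₀ ht]
  linarith

-- `ConvexOn` does not apply here: `EReal` is not an `ℝ`-module.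
def ConvexEReal {E : Type*} [AddCommGroup E] [Module ℝ E] (g : E → EReal) : Prop :=
  ∀ x y : E, ∀ a b : ℝ, 0 ≤ a → 0 ≤ b → a + b = 1 →
    g (a • x + b • y) ≤ (a : EReal) * g x + (b : EReal) * g y

theorem ConvexEReal.le_add_of_isMinOn_add {E : Type*} [AddCommGroup E] [Module ℝ E]
    {g : E → EReal} (hg : ConvexEReal g) {φ : E → ℝ} {x v : E} {φ' : ℝ}
    (hφ : HasLineDerivAt ℝ φ φ' x (v - x)) (hmin : IsMinOn (fun u => g u + φ u) univ x)
    {gx gv : ℝ} (hgx : g x = gx) (hgv : g v = gv) : gx ≤ gv + φ' := by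
  suffices gx - gv ≤ φ' by linarith
  refine hφ.le_of_eventually_mul_le_sub ?_
  filter_upwards [Ioo_mem_nhdsGT one_pos] with t ⟨ht0, ht1⟩
  have hseg : x + t • (v - x) = t • v + (1 - t) • x := by module
  have hconv := hg v x t (1 - t) ht0.le (by linarith) (by ring)
  rw [← hseg, hgx, hgv] at hconv
  have hcomp : ((gx + φ x : ℝ) : EReal)
      ≤ ((t * gv + (1 - t) * gx + φ (x + t • (v - x)) : ℝ) : EReal) :=
    calc ((gx + φ x : ℝ) : EReal) = g x + φ x := by rw [hgx, EReal.coe_add]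
      _ ≤ g (x + t • (v - x)) + φ (x + t • (v - x)) := isMinOn_univ_iff.1 hmin _
      _ ≤ (t : EReal) * gv + ((1 - t : ℝ) : EReal) * gx + φ (x + t • (v - x)) := by gcongr
      _ = ((t * gv + (1 - t) * gx + φ (x + t • (v - x)) : ℝ) : EReal) := by norm_cast
  linarith [EReal.coe_le_coe_iff.1 hcomp]

theorem EReal.exists_coe_of_add_coe_le {a b : EReal} {r s : ℝ} (ha : a ≠ ⊥) (hb : b ≠ ⊤)
    (h : a + r ≤ b + s) : ∃ a' b' : ℝ, a = a' ∧ b = b' := by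
  have hb' : b ≠ ⊥ := by
    rintro rfl
    simp_all
  have ha' : a ≠ ⊤ := by
    rintro rfl
    rw [EReal.top_add_coe, top_le_iff] at h
    exact EReal.add_ne_top hb (EReal.coe_ne_top s) h
  exact ⟨a.toReal, b.toReal, (EReal.coe_toReal ha' ha).symm, (EReal.coe_toReal hb hb').symm⟩

section Bregman

variable {F : Type*} [NormedAddCommGroup F] [InnerProductSpace ℝ F] [CompleteSpace F]

noncomputable def bregmanDiv (φ : F → ℝ) (x y : F) : ℝ := φ x - φ y - ⟪gradient φ y, x - y⟫

theorem bregmanDiv_sub_bregmanDiv_sub_bregmanDiv (φ : F → ℝ) (x y z : F) :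
    bregmanDiv φ x z - bregmanDiv φ x y - bregmanDiv φ y z
      = ⟪gradient φ y - gradient φ z, x - y⟫ := by
  simp only [bregmanDiv, inner_sub_left, inner_sub_right]
  ring

theorem DifferentiableAt.hasFDerivAt_bregmanDiv_left {φ : F → ℝ} {x : F}
    (hφ : DifferentiableAt ℝ φ x) (y : F) :
    HasFDerivAt (bregmanDiv φ · y) (fderiv ℝ φ x - innerSL ℝ (gradient φ y)) x :=
  (hφ.hasFDerivAt.sub_const _).sub <|
    ((innerSL ℝ (gradient φ y)).hasFDerivAt.comp x ((hasFDerivAt_id x).sub_const y)).congr_fderiv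
      (by ext; simp)

end Bregman

theorem vbmm_descent_lemma_general (d : ℕ)
    (D : Set (EuclideanSpace ℝ (Fin d)))
    (f : EuclideanSpace ℝ (Fin d) → ℝ)
    (g : EuclideanSpace ℝ (Fin d) → EReal)
    (hg_conv : ∀ x y : EuclideanSpace ℝ (Fin d), ∀ a b : ℝ,
      0 ≤ a → 0 ≤ b → a + b = 1 →
      g (a • x + b • y) ≤ (a : EReal) * g x + (b : EReal) * g y)
    (hg_dom : {x | g x ≠ ⊤} ⊆ D)
    (y : EuclideanSpace ℝ (Fin d))
    (h : EuclideanSpace ℝ (Fin d) → ℝ)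
    (hh_diff : Differentiable ℝ h)
    (hmaj : ∀ x ∈ D,
      f x ≤ f y + ⟪gradient f y, x - y⟫
        + (h x - h y - ⟪gradient h y, x - y⟫))
    (xp : EuclideanSpace ℝ (Fin d))
    (hmin : ∀ u : EuclideanSpace ℝ (Fin d),
      g xp + ((⟪gradient f y, xp⟫
          + (h xp - h y - ⟪gradient h y, xp - y⟫) : ℝ) : EReal)
        ≤ g u + ((⟪gradient f y, u⟫
          + (h u - h y - ⟪gradient h y, u - y⟫) : ℝ) : EReal))
    (v : EuclideanSpace ℝ (Fin d)) :
    ((f xp : ℝ) : EReal) + g xp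
        + ((h v - h xp - ⟪gradient h xp, v - xp⟫ : ℝ) : EReal)
        + ((f v - f y - ⟪gradient f y, v - y⟫ : ℝ) : EReal)
      ≤ ((f v : ℝ) : EReal) + g v
        + ((h v - h y - ⟪gradient h y, v - y⟫ : ℝ) : EReal) := by
  obtain hxp_bot | hxp_bot := eq_or_ne (g xp) ⊥
  · simp [hxp_bot]
  obtain hv_top | hv_top := eq_or_ne (g v) ⊤
  · rw [hv_top, EReal.coe_add_top, EReal.top_add_coe]
    exact le_top
  obtain ⟨gx, gv, hgx, hgv⟩ := EReal.exists_coe_of_add_coe_le hxp_bot hv_top (hmin v)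
  have hxpD : xp ∈ D := hg_dom (by simp [hgx])
  have hopt := ConvexEReal.le_add_of_isMinOn_add hg_conv
    (((innerSL ℝ (gradient f y)).hasFDerivAt.add
      ((hh_diff xp).hasFDerivAt_bregmanDiv_left y)).hasLineDerivAt (v - xp))
    (isMinOn_univ_iff.2 hmin) hgx hgv
  have hthree := bregmanDiv_sub_bregmanDiv_sub_bregmanDiv h v xp y
  simp only [add_apply, sub_apply, innerSL_apply_apply, ← inner_gradient_left] at hopt
  simp only [bregmanDiv, inner_sub_left] at hthree
  have hsplit : ⟪gradient f y, v - y⟫ = ⟪gradient f y, v - xp⟫ + ⟪gradient f y, xp - y⟫ := by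
    rw [← inner_add_right, sub_add_sub_cancel]
  rw [hgx, hgv]
  norm_cast
  linarith [hmaj xp hxpD]

/-- VBMM descent lemma: if `x⁺` minimizes the Bregman proximal subproblem
`x ↦ g(x) + ⟪∇f(y), x⟫ + D_{h_y}(x,y)` at `y ∈ D`, then for every `v ∈ D`,
`F(x⁺) - F(v) ≤ D_{h_y}(v,y) - D_{h_y}(v,x⁺) - D_f(v,y)` (stated additively in
`EReal` since `g` may take the value `+∞`). -/
theorem vbmm_descent_lemma (d : ℕ)
    (D : Set (EuclideanSpace ℝ (Fin d))) (hD : IsOpen D)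
    (f : EuclideanSpace ℝ (Fin d) → ℝ)
    (hf_diff : ∀ x ∈ D, DifferentiableAt ℝ f x)
    (hf_conv : ConvexOn ℝ D f)
    (g : EuclideanSpace ℝ (Fin d) → EReal)
    (hg_nebot : ∀ x, g x ≠ ⊥)
    (hg_proper : ∃ x, g x ≠ ⊤)
    (hg_conv : ∀ x y : EuclideanSpace ℝ (Fin d), ∀ a b : ℝ,
      0 ≤ a → 0 ≤ b → a + b = 1 →
      g (a • x + b • y) ≤ (a : EReal) * g x + (b : EReal) * g y)
    (hg_lsc : LowerSemicontinuous g)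
    (hg_dom : {x | g x ≠ ⊤} ⊆ D)
    (y : EuclideanSpace ℝ (Fin d)) (hy : y ∈ D)
    (h : EuclideanSpace ℝ (Fin d) → ℝ)
    (hh_diff : Differentiable ℝ h)
    (hh_sconv : StrictConvexOn ℝ Set.univ h)
    (hmaj : ∀ x ∈ D,
      f x ≤ f y + ⟪gradient f y, x - y⟫
        + (h x - h y - ⟪gradient h y, x - y⟫))
    (xp : EuclideanSpace ℝ (Fin d))
    (hmin : ∀ u : EuclideanSpace ℝ (Fin d),
      g xp + ((⟪gradient f y, xp⟫
          + (h xp - h y - ⟪gradient h y, xp - y⟫) : ℝ) : EReal)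
        ≤ g u + ((⟪gradient f y, u⟫
          + (h u - h y - ⟪gradient h y, u - y⟫) : ℝ) : EReal))
    (v : EuclideanSpace ℝ (Fin d)) (hv : v ∈ D) :
    ((f xp : ℝ) : EReal) + g xp
        + ((h v - h xp - ⟪gradient h xp, v - xp⟫ : ℝ) : EReal)
        + ((f v - f y - ⟪gradient f y, v - y⟫ : ℝ) : EReal)
      ≤ ((f v : ℝ) : EReal) + g v
        + ((h v - h y - ⟪gradient h y, v - y⟫ : ℝ) : EReal) :=
  vbmm_descent_lemma_general d D f g hg_conv hg_dom y h hh_diff hmaj xp hmin v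
end

section
/- Under the setting of the VBMM descent lemma, taking v = y = x^(ℓ) gives F(x^(ℓ+1)) - F(x^(ℓ)) ≤ -D_{h_{x^(ℓ)}}(x^(ℓ), x^(ℓ+1)) ≤ 0; hence the sequence (F(x^(ℓ))) is nonincreasing. Moreover, if for all ℓ, D_{h_{x^(ℓ)}}(x^(ℓ), x^(ℓ+1)) ≥ ρ(‖x^(ℓ) - x^(ℓ+1)‖) for an increasing function ρ : [0,∞) → [0,∞) vanishing only at 0, and F is bounded below, then ‖x^(ℓ+1) - x^(ℓ)‖ → 0. -/
open scoped RealInnerProductSpace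
open Filter

/-- If `χ` is convex and `p` minimizes `χ + D_h(·, p)` (with `h` differentiable at `p`),
then `p` minimizes `χ`. -/
lemma vbmm_aux_min {E : Type*} [NormedAddCommGroup E] [InnerProductSpace ℝ E]
    [CompleteSpace E] (h χ : E → ℝ) (p : E)
    (hd : DifferentiableAt ℝ h p)
    (hχ : ConvexOn ℝ Set.univ χ)
    (hm : ∀ u : E, χ p ≤ χ u + (h u - h p - ⟪gradient h p, u - p⟫)) :
    ∀ u : E, χ p ≤ χ u := by
  intro u
  set v : E := u - p with hv
  set L : ℝ := ⟪gradient h p, v⟫ with hL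
  have hld : HasLineDerivAt ℝ h L p v := by
    have := (hd.hasGradientAt.hasFDerivAt).hasLineDerivAt v
    simpa [hL, InnerProductSpace.toDual_apply_apply] using this
  have htend : Tendsto (fun t : ℝ => t⁻¹ • (h (p + t • v) - h p) - L) (nhdsWithin 0 (Set.Ioi 0))
      (nhds 0) := by
    simpa using (hld.tendsto_slope_zero_right).sub_const L
  have key : ∀ t ∈ Set.Ioc (0:ℝ) 1,
      χ p - χ u ≤ t⁻¹ • (h (p + t • v) - h p) - L := by
    intro t ht
    have ht0 : 0 < t := ht.1
    have hcomb : p + t • v = (1 - t) • p + t • u := by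
      rw [hv]; module
    have hχc : χ (p + t • v) ≤ (1 - t) * χ p + t * χ u := by
      rw [hcomb]
      exact hχ.2 (Set.mem_univ p) (Set.mem_univ u) (by linarith [ht.2]) ht0.le (by ring)
    have hm' := hm (p + t • v)
    have hinner : ⟪gradient h p, p + t • v - p⟫ = t * L := by
      simp [hL, real_inner_smul_right]
    rw [hinner] at hm'
    have h1 : t * (χ p - χ u + L) ≤ h (p + t • v) - h p := by nlinarith
    have h2 : χ p - χ u + L ≤ (h (p + t • v) - h p) / t :=
      (le_div_iff₀' ht0).mpr h1
    rw [div_eq_inv_mul] at h2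
    rw [smul_eq_mul]
    linarith
  have hle : χ p - χ u ≤ 0 := by
    refine ge_of_tendsto htend ?_
    filter_upwards [Filter.eventually_of_mem
      (Ioc_mem_nhdsGT_of_mem (Set.mem_Ico.mpr ⟨le_refl (0:ℝ), zero_lt_one⟩))
      (fun t ht => key t ht)] with t ht using ht
  linarith

/-- Monotone decrease of the VBMM objective values and vanishing of successive
differences: `F(x^{ℓ+1}) - F(x^ℓ) ≤ -D_{h_{x^ℓ}}(x^ℓ, x^{ℓ+1}) ≤ 0`, and if the
Bregman divergences dominate `ρ(‖x^ℓ - x^{ℓ+1}‖)` with `ρ` increasing and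
vanishing only at `0`, and `F` is bounded below, then
`‖x^{ℓ+1} - x^ℓ‖ → 0`. -/
theorem vbmm_decrease_and_vanishing_steps (d : ℕ)
    (D : Set (EuclideanSpace ℝ (Fin d))) (hD : IsOpen D)
    (f g : EuclideanSpace ℝ (Fin d) → ℝ)
    (hf_diff : ∀ x ∈ D, DifferentiableAt ℝ f x)
    (hf_conv : ConvexOn ℝ D f)
    (hg_conv : ConvexOn ℝ Set.univ g)
    (hg_lsc : LowerSemicontinuous g)
    (H : EuclideanSpace ℝ (Fin d) → EuclideanSpace ℝ (Fin d) → ℝ)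
    (hH_diff : ∀ y ∈ D, Differentiable ℝ (H y))
    (hH_sconv : ∀ y ∈ D, StrictConvexOn ℝ Set.univ (H y))
    (x : ℕ → EuclideanSpace ℝ (Fin d))
    (hxD : ∀ ℓ, x ℓ ∈ D)
    (hmaj : ∀ ℓ, ∀ u ∈ D,
      f u ≤ f (x ℓ) + ⟪gradient f (x ℓ), u - x ℓ⟫
        + (H (x ℓ) u - H (x ℓ) (x ℓ)
            - ⟪gradient (H (x ℓ)) (x ℓ), u - x ℓ⟫))
    (hmin : ∀ ℓ, ∀ u : EuclideanSpace ℝ (Fin d),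
      g (x (ℓ + 1)) + ⟪gradient f (x ℓ), x (ℓ + 1)⟫
          + (H (x ℓ) (x (ℓ + 1)) - H (x ℓ) (x ℓ)
              - ⟪gradient (H (x ℓ)) (x ℓ), x (ℓ + 1) - x ℓ⟫)
        ≤ g u + ⟪gradient f (x ℓ), u⟫
          + (H (x ℓ) u - H (x ℓ) (x ℓ)
              - ⟪gradient (H (x ℓ)) (x ℓ), u - x ℓ⟫))
    (hbdd : ∃ B : ℝ, ∀ u, B ≤ f u + g u)
    (ρ : ℝ → ℝ) (hρ_mono : StrictMonoOn ρ (Set.Ici 0))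
    (hρ0 : ρ 0 = 0) (hρ_pos : ∀ s : ℝ, 0 < s → 0 < ρ s)
    (hρ_nonneg : ∀ s : ℝ, 0 ≤ s → 0 ≤ ρ s)
    (hlow : ∀ ℓ, ρ ‖x ℓ - x (ℓ + 1)‖
      ≤ H (x ℓ) (x ℓ) - H (x ℓ) (x (ℓ + 1))
        - ⟪gradient (H (x ℓ)) (x (ℓ + 1)), x ℓ - x (ℓ + 1)⟫) :
    (∀ ℓ, (f (x (ℓ + 1)) + g (x (ℓ + 1))) - (f (x ℓ) + g (x ℓ))
        ≤ -(H (x ℓ) (x ℓ) - H (x ℓ) (x (ℓ + 1))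
            - ⟪gradient (H (x ℓ)) (x (ℓ + 1)), x ℓ - x (ℓ + 1)⟫)) ∧
    (∀ ℓ, 0 ≤ H (x ℓ) (x ℓ) - H (x ℓ) (x (ℓ + 1))
            - ⟪gradient (H (x ℓ)) (x (ℓ + 1)), x ℓ - x (ℓ + 1)⟫) ∧
    (Antitone fun ℓ => f (x ℓ) + g (x ℓ)) ∧
    Tendsto (fun ℓ => ‖x (ℓ + 1) - x ℓ‖) atTop (nhds 0) := by
  -- nonnegativity of the Bregman divergences (second claim)
  have hDpos : ∀ ℓ, 0 ≤ H (x ℓ) (x ℓ) - H (x ℓ) (x (ℓ + 1))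
      - ⟪gradient (H (x ℓ)) (x (ℓ + 1)), x ℓ - x (ℓ + 1)⟫ := by
    intro ℓ
    exact le_trans (hρ_nonneg _ (norm_nonneg _)) (hlow ℓ)
  -- the main descent inequality (first claim)
  have hdesc : ∀ ℓ, (f (x (ℓ + 1)) + g (x (ℓ + 1))) - (f (x ℓ) + g (x ℓ))
      ≤ -(H (x ℓ) (x ℓ) - H (x ℓ) (x (ℓ + 1))
          - ⟪gradient (H (x ℓ)) (x (ℓ + 1)), x ℓ - x (ℓ + 1)⟫) := by
    intro ℓ
    set y := x ℓ with hy
    set p := x (ℓ + 1) with hp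
    set c : EuclideanSpace ℝ (Fin d) :=
      gradient f y - gradient (H y) y + gradient (H y) p with hc
    set χ : EuclideanSpace ℝ (Fin d) → ℝ := fun u => g u + ⟪c, u⟫ with hχdef
    have hχconv : ConvexOn ℝ Set.univ χ := by
      refine ⟨convex_univ, ?_⟩
      intro a _ b _ s t hs ht hst
      have hg' := hg_conv.2 (Set.mem_univ a) (Set.mem_univ b) hs ht hst
      simp only [hχdef, inner_add_right, real_inner_smul_right, smul_eq_mul] at hg' ⊢
      linarith
    have hm : ∀ u, χ p ≤ χ u + (H y u - H y p - ⟪gradient (H y) p, u - p⟫) := by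
      intro u
      have h0 := hmin ℓ u
      simp only [hχdef, hc, inner_sub_left, inner_add_left, inner_sub_right] at h0 ⊢
      linarith
    have hmin' := vbmm_aux_min (H y) χ p ((hH_diff y (hxD ℓ)).differentiableAt) hχconv hm y
    have hmaj' := hmaj ℓ p (hxD (ℓ + 1))
    simp only [hχdef, hc, inner_sub_left, inner_add_left, inner_sub_right] at hmin' hmaj' ⊢
    linarith
  -- antitonicity (third claim)
  have hanti : Antitone fun ℓ => f (x ℓ) + g (x ℓ) := by
    refine antitone_nat_of_succ_le ?_
    intro ℓ
    have := hdesc ℓ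
    have := hDpos ℓ
    linarith
  refine ⟨hdesc, hDpos, hanti, ?_⟩
  -- convergence of objective values
  obtain ⟨B, hB⟩ := hbdd
  set F : ℕ → ℝ := fun ℓ => f (x ℓ) + g (x ℓ) with hF
  have hbdd' : BddBelow (Set.range F) := ⟨B, by rintro _ ⟨ℓ, rfl⟩; exact hB (x ℓ)⟩
  have h1 : Tendsto F atTop (nhds (⨅ ℓ, F ℓ)) := tendsto_atTop_ciInf hanti hbdd'
  have h2 : Tendsto (fun ℓ => F (ℓ + 1)) atTop (nhds (⨅ ℓ, F ℓ)) :=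
    h1.comp (tendsto_add_atTop_nat 1)
  have h3 : Tendsto (fun ℓ => F ℓ - F (ℓ + 1)) atTop (nhds 0) := by
    simpa using h1.sub h2
  -- squeeze: ρ(‖x ℓ - x (ℓ+1)‖) → 0
  have hsq : Tendsto (fun ℓ => ρ ‖x ℓ - x (ℓ + 1)‖) atTop (nhds 0) := by
    refine squeeze_zero (fun ℓ => hρ_nonneg _ (norm_nonneg _)) (fun ℓ => ?_) h3
    have := hlow ℓ
    have := hdesc ℓ
    simp only [hF]
    linarith
  -- conclude ‖x (ℓ+1) - x ℓ‖ → 0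
  rw [Metric.tendsto_atTop]
  intro ε hε
  have hεint : (0:ℝ) < ρ ε := hρ_pos ε hε
  rw [Metric.tendsto_atTop] at hsq
  obtain ⟨N, hN⟩ := hsq (ρ ε) hεint
  refine ⟨N, fun n hn => ?_⟩
  have h5 := hN n hn
  rw [Real.dist_eq, sub_zero] at h5
  have h6 : ρ ‖x n - x (n + 1)‖ < ρ ε := by
    have := abs_le.mp h5.le
    calc ρ ‖x n - x (n + 1)‖ ≤ |ρ ‖x n - x (n + 1)‖| := le_abs_self _
      _ < ρ ε := h5
  have h7 : ‖x n - x (n + 1)‖ < ε := by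
    by_contra hcon
    push_neg at hcon
    have := hρ_mono.monotoneOn (Set.mem_Ici.mpr hε.le)
      (Set.mem_Ici.mpr (le_trans hε.le hcon)) hcon
    linarith
  rw [Real.dist_eq, sub_zero, abs_of_nonneg (norm_nonneg _), norm_sub_rev]
  exact h7
end
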